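/- arXiv:2507.13679 — 2 statements merged into one kernel-verified Lean document; each statement's English description precedes it below -/
import Mathlib

section
/- For a prime p ≥ 3, two matrices A, B ∈ SL₂(F_p) with equal trace a, where a² − 4 is a non-square in F_p, are conjugate in SL₂(F_p). -/
/-!
Both matrices are conjugate to the companion matrix `!![0, -1; 1, a]` of `X² - aX + 1`: if
`det [v, A v] = 1` then `[v, A v]` conjugates it to `A`, by Cayley–Hamilton. The form
`v ↦ det [v, A v]` is a binary quadratic form of discriminant `a² - 4 ≠ 0`, and over a finite field
of odd characteristic such a form represents `1`, since `u² - D y² = c` is always solvable by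
counting the values of the two sides.
-/

open Matrix

namespace Matrix.SpecialLinearGroup

section CommRing

variable {R : Type*} [CommRing R]

def companion (a : R) : SpecialLinearGroup (Fin 2) R :=
  ⟨!![0, -1; 1, a], by simp [det_fin_two_of]⟩

lemma det_fin_two_eq_one (A : SpecialLinearGroup (Fin 2) R) :
    A 0 0 * A 1 1 - A 0 1 * A 1 0 = 1 := by
  rw [← det_fin_two, A.det_coe]

lemma sub_sq_add_four_mul_eq_trace_sq_sub_four (A : SpecialLinearGroup (Fin 2) R) :
    (A 0 0 - A 1 1) ^ 2 + 4 * A 0 1 * A 1 0 = (A : Matrix (Fin 2) (Fin 2) R).trace ^ 2 - 4 := by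
  rw [trace_fin_two]
  linear_combination (-4) * det_fin_two_eq_one A

lemma ringChar_ne_two_of_not_isSquare_sq_sub_four {a : R} (h : ¬IsSquare (a ^ 2 - 4)) :
    ringChar R ≠ 2 := by
  intro h2
  have h4 : (4 : R) = 0 := by
    have := ringChar.Nat.cast_ringChar (R := R)
    rw [h2, Nat.cast_ofNat] at this
    linear_combination 2 * this
  exact h ⟨a, by rw [h4, sub_zero, sq]⟩

lemma isConj_companion_of_det_eq_one (A : SpecialLinearGroup (Fin 2) R) (v : Fin 2 → R)
    (hv : (of ![v, (A : Matrix (Fin 2) (Fin 2) R) *ᵥ v]).det = 1) :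
    IsConj (companion (A : Matrix (Fin 2) (Fin 2) R).trace) A := by
  set P := (of ![v, (A : Matrix (Fin 2) (Fin 2) R) *ᵥ v])ᵀ
  have hP : P * !![0, -1; 1, (A : Matrix (Fin 2) (Fin 2) R).trace] = A * P := by
    have hdet := det_fin_two_eq_one A
    ext i j
    fin_cases i <;> fin_cases j <;>
      simp only [P, Fin.isValue, Fin.zero_eta, Fin.mk_one, mul_apply, Fin.sum_univ_two,
        transpose_apply, of_apply, cons_val', cons_val_zero, cons_val_one, cons_val_fin_one,
        mulVec_fin_two, trace_fin_two, mul_zero, mul_one, mul_neg, zero_add]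
    · linear_combination v 0 * hdet
    · linear_combination v 1 * hdet
  exact isConj_iff.mpr ⟨⟨P, by rw [det_transpose, hv]⟩, mul_inv_eq_iff_eq_mul.mpr (Subtype.ext hP)⟩

end CommRing

section FiniteField

variable {K : Type*} [Field K] [Fintype K]

lemma exists_sq_sub_mul_sq_eq (hK : ringChar K ≠ 2) {D : K} (hD : D ≠ 0) (c : K) :
    ∃ u y : K, u ^ 2 - D * y ^ 2 = c := by
  open Polynomial in
  obtain ⟨u, y, h⟩ := FiniteField.exists_root_sum_quadratic (f := X ^ 2) (g := C (-D) * X ^ 2 - C c)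
    (degree_X_pow 2) (by compute_degree!) (FiniteField.odd_card_of_char_ne_two hK)
  refine ⟨u, y, ?_⟩
  simp only [eval_sub, eval_mul, eval_pow, eval_X, eval_C] at h
  linear_combination h

/-- For `A = !![α, β; γ, δ]` and `v = ![x, y]`, completing the square gives
`4γ det [v, A v] = 4γ (γx² + (δ - α)xy - βy²) = (2γx + (δ - α)y)² - (tr A² - 4) y²`,
so `det [v, A v] = 1` is solvable as soon as `u² - (tr A² - 4) y² = 4γ` is;
`γ ≠ 0` since otherwise `tr A² - 4 = (α - δ)²`. -/
lemma exists_det_eq_one_of_not_isSquare (A : SpecialLinearGroup (Fin 2) K)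
    (hA : ¬IsSquare ((A : Matrix (Fin 2) (Fin 2) K).trace ^ 2 - 4)) :
    ∃ v : Fin 2 → K, (of ![v, (A : Matrix (Fin 2) (Fin 2) K) *ᵥ v]).det = 1 := by
  have hdiscr := sub_sq_add_four_mul_eq_trace_sq_sub_four A
  have hK := ringChar_ne_two_of_not_isSquare_sq_sub_four hA
  have h2 : (2 : K) ≠ 0 := Ring.two_ne_zero hK
  have hγ : A 1 0 ≠ 0 := fun h => hA ⟨A 0 0 - A 1 1, by rw [← hdiscr, h]; ring⟩
  have hD : (A : Matrix (Fin 2) (Fin 2) K).trace ^ 2 - 4 ≠ 0 := fun h => hA (h ▸ IsSquare.zero)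
  obtain ⟨u, y, huy⟩ := exists_sq_sub_mul_sq_eq hK hD (4 * A 1 0)
  refine ⟨![(u - (A 1 1 - A 0 0) * y) / (2 * A 1 0), y], ?_⟩
  simp only [det_fin_two, of_apply, cons_val_zero, cons_val_one, mulVec_fin_two]
  field_simp
  linear_combination huy - y ^ 2 * hdiscr

theorem isConj_of_trace_eq_of_not_isSquare {A B : SpecialLinearGroup (Fin 2) K}
    (hAB : (A : Matrix (Fin 2) (Fin 2) K).trace = (B : Matrix (Fin 2) (Fin 2) K).trace)
    (hA : ¬IsSquare ((A : Matrix (Fin 2) (Fin 2) K).trace ^ 2 - 4)) : IsConj A B := by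
  obtain ⟨v, hv⟩ := exists_det_eq_one_of_not_isSquare A hA
  obtain ⟨w, hw⟩ := exists_det_eq_one_of_not_isSquare B (hAB ▸ hA)
  exact (isConj_companion_of_det_eq_one A v hv).symm.trans
    (hAB ▸ isConj_companion_of_det_eq_one B w hw)

end FiniteField

end Matrix.SpecialLinearGroup

theorem conj_of_trace_eq_nonsquare_general
    (p : ℕ) [Fact p.Prime] (a : ZMod p)
    (ha : ¬ ∃ x : ZMod p, x ^ 2 = a ^ 2 - 4)
    (A B : Matrix.SpecialLinearGroup (Fin 2) (ZMod p))
    (hA : (A : Matrix (Fin 2) (Fin 2) (ZMod p)).trace = a)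
    (hB : (B : Matrix (Fin 2) (Fin 2) (ZMod p)).trace = a) :
    IsConj A B :=
  SpecialLinearGroup.isConj_of_trace_eq_of_not_isSquare (hA.trans hB.symm)
    (hA ▸ fun ⟨x, hx⟩ => ha ⟨x, by rw [hx, sq]⟩)

theorem conj_of_trace_eq_nonsquare
    (p : ℕ) [Fact p.Prime] (hp : 3 ≤ p) (a : ZMod p)
    (ha : ¬ ∃ x : ZMod p, x ^ 2 = a ^ 2 - 4)
    (A B : Matrix.SpecialLinearGroup (Fin 2) (ZMod p))
    (hA : (A : Matrix (Fin 2) (Fin 2) (ZMod p)).trace = a)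
    (hB : (B : Matrix (Fin 2) (Fin 2) (ZMod p)).trace = a) :
    IsConj A B :=
  conj_of_trace_eq_nonsquare_general p a ha A B hA hB
end

section
/- For a prime p ≥ 3, the conjugacy class in SL₂(F_p) of [[±1, α], [0, ±1]] with α ∈ F_p^× has cardinality (p² − 1)/2. -/
/-!
By orbit–stabilizer, the conjugacy class of `A` has `|SL₂(𝔽_p)| / |C(A)|` elements, where
`|SL₂(𝔽_p)| = |GL₂(𝔽_p)| / (p - 1) = p (p² - 1)`. A matrix commutes with `[[ε, α], [0, ε]]`,
`α ≠ 0`, exactly when it has the form `[[s, b], [0, s]]`; in `SL₂` this forces `s = ±1`, so the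
centralizer `C(A)` has `2p` elements.
-/

open Matrix

theorem Nat.card_isConj_mul_card_centralizer {G : Type*} [Group G] (g : G) :
    Nat.card {h // IsConj g h} * Nat.card (Subgroup.centralizer {g}) = Nat.card G := by
  have horbit : (MulAction.orbit (ConjAct G) g).ncard = Nat.card {h // IsConj g h} := by
    rw [← Nat.card_coe_set_eq]
    exact Nat.card_congr <| Equiv.subtypeEquivRight fun h =>
      ConjAct.mem_orbit_conjAct.trans isConj_comm
  rw [← horbit, ← MulAction.index_stabilizer, Subgroup.nat_card_centralizer_nat_card_stabilizer,
    Subgroup.index_mul_card, Nat.card_congr ConjAct.ofConjAct.toEquiv]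

theorem Matrix.SpecialLinearGroup.card_mul_card_units {n R : Type*} [Fintype n] [DecidableEq n]
    [Nonempty n] [CommRing R] :
    Nat.card (SpecialLinearGroup n R) * Nat.card Rˣ = Nat.card (GL n R) := by
  have hker : (GeneralLinearGroup.det : GL n R →* Rˣ).ker ≃ SpecialLinearGroup n R :=
    { toFun g := ⟨g.1, by simpa using congrArg Units.val (MonoidHom.mem_ker.1 g.2)⟩
      invFun A := ⟨A.toGL, by simp⟩
      left_inv g := by ext : 3; rfl
      right_inv A := by ext : 2; rfl }
  have hdet := GeneralLinearGroup.det_surjective (n := n) (R := R)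
  rw [← Nat.card_congr hker,
    ← Nat.card_congr (QuotientGroup.quotientKerEquivOfSurjective _ hdet).toEquiv, mul_comm,
    ← Subgroup.card_eq_card_quotient_mul_card_subgroup]

theorem Matrix.SpecialLinearGroup.card_fin_two {𝔽 : Type*} [Field 𝔽] [Fintype 𝔽] :
    Nat.card (SpecialLinearGroup (Fin 2) 𝔽) = Fintype.card 𝔽 * (Fintype.card 𝔽 ^ 2 - 1) := by
  have hGL := SpecialLinearGroup.card_mul_card_units (n := Fin 2) (R := 𝔽)
  rw [card_GL_field, Fin.prod_univ_two, Nat.card_units,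
    Nat.card_eq_fintype_card (α := 𝔽)] at hGL
  set q := Fintype.card 𝔽
  have hq : 1 < q := Fintype.one_lt_card
  refine Nat.eq_of_mul_eq_mul_right (show 0 < q - 1 by omega) (hGL.trans ?_)
  simp only [Fin.val_zero, Fin.val_one, pow_zero, pow_one]
  rw [sq q, ← Nat.mul_sub_one]
  ring

theorem Matrix.commute_fin_two_jordan_iff {R : Type*} [CommRing R] [NoZeroDivisors R]
    {ε α : R} (hα : α ≠ 0) (N : Matrix (Fin 2) (Fin 2) R) :
    Commute !![ε, α; 0, ε] N ↔ N 1 0 = 0 ∧ N 1 1 = N 0 0 := by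
  rw [N.eta_fin_two, Commute, SemiconjBy, mul_fin_two, mul_fin_two]
  simp only [Fin.isValue, zero_mul, zero_add, mul_zero, add_zero, EmbeddingLike.apply_eq_iff_eq,
    vecCons_inj, and_true, of_apply, cons_val', cons_val_zero, cons_val_fin_one, cons_val_one]
  constructor
  · rintro ⟨⟨h00, h01⟩, -, h11⟩
    refine ⟨(mul_eq_zero.1 (by linear_combination h00)).resolve_left hα,
      mul_left_cancel₀ hα (by linear_combination h01)⟩
  · rintro ⟨h10, h11⟩
    simp only [h10, h11]
    refine ⟨⟨?_, ?_⟩, ?_, ?_⟩ <;> ring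

theorem Nat.card_mul_self_eq_one {R : Type*} [Ring R] [NoZeroDivisors R] (h : (-1 : R) ≠ 1) :
    Nat.card {s : R // s * s = 1} = 2 := by
  simp_rw [mul_self_eq_one_iff]
  exact (Nat.card_coe_set_eq ({1, -1} : Set R)).trans (Set.ncard_pair h.symm)

namespace Matrix.SpecialLinearGroup

variable {R : Type*} [CommRing R] [NoZeroDivisors R] {A : SpecialLinearGroup (Fin 2) R}
  {ε α : R}

theorem mem_centralizer_jordan_iff (hα : α ≠ 0)
    (hA : (A : Matrix (Fin 2) (Fin 2) R) = !![ε, α; 0, ε]) (B : SpecialLinearGroup (Fin 2) R) :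
    B ∈ Subgroup.centralizer {A} ↔ B 1 0 = 0 ∧ B 1 1 = B 0 0 := by
  rw [Subgroup.mem_centralizer_singleton_iff, eq_comm, ← commute_fin_two_jordan_iff hα, ← hA,
    Commute, SemiconjBy, ← coe_mul, ← coe_mul]
  exact ⟨congrArg _, fun h => Subtype.ext h⟩

def centralizerJordanEquiv (hα : α ≠ 0)
    (hA : (A : Matrix (Fin 2) (Fin 2) R) = !![ε, α; 0, ε]) :
    Subgroup.centralizer {A} ≃ {s : R // s * s = 1} × R where
  toFun B := (⟨B.1 0 0, by
      obtain ⟨h10, h11⟩ := (mem_centralizer_jordan_iff hα hA B).1 B.2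
      have hdet := B.1.2
      rwa [det_fin_two, h10, h11, mul_zero, sub_zero] at hdet⟩, B.1 0 1)
  invFun sb := ⟨⟨!![sb.1.1, sb.2; 0, sb.1.1], by simp [det_fin_two_of, sb.1.2]⟩,
    (mem_centralizer_jordan_iff hα hA _).2 ⟨rfl, rfl⟩⟩
  left_inv B := by
    obtain ⟨h10, h11⟩ := (mem_centralizer_jordan_iff hα hA B).1 B.2
    ext i j
    fin_cases i <;> fin_cases j <;> simp [h10, h11]
  right_inv sb := rfl

theorem card_centralizer_jordan [Finite R] (hR : (-1 : R) ≠ 1) (hα : α ≠ 0)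
    (hA : (A : Matrix (Fin 2) (Fin 2) R) = !![ε, α; 0, ε]) :
    Nat.card (Subgroup.centralizer {A}) = 2 * Nat.card R := by
  rw [Nat.card_congr (centralizerJordanEquiv hα hA), Nat.card_prod, Nat.card_mul_self_eq_one hR]

end Matrix.SpecialLinearGroup

theorem conj_class_card_nonsemisimple_general
    (p : ℕ) [Fact p.Prime] (hp : 3 ≤ p)
    (ε : ZMod p) (α : (ZMod p)ˣ)
    (A : Matrix.SpecialLinearGroup (Fin 2) (ZMod p))
    (hA : (A : Matrix (Fin 2) (Fin 2) (ZMod p)) = !![ε, (α : ZMod p); 0, ε]) :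
    Nat.card {B : Matrix.SpecialLinearGroup (Fin 2) (ZMod p) // IsConj A B}
      = (p ^ 2 - 1) / 2 := by
  have : Fact (2 < p) := ⟨hp⟩
  have hp0 : 0 < p := (Fact.out : p.Prime).pos
  have hcard := Nat.card_isConj_mul_card_centralizer A
  rw [SpecialLinearGroup.card_centralizer_jordan ZMod.neg_one_ne_one α.ne_zero hA,
    SpecialLinearGroup.card_fin_two, Nat.card_zmod, ZMod.card] at hcard
  calc Nat.card {B // IsConj A B}
      = Nat.card {B // IsConj A B} * (2 * p) / (2 * p) := (Nat.mul_div_cancel _ (by omega)).symm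
    _ = p * (p ^ 2 - 1) / (p * 2) := by rw [hcard, mul_comm 2 p]
    _ = (p ^ 2 - 1) / 2 := Nat.mul_div_mul_left _ _ hp0

theorem conj_class_card_nonsemisimple
    (p : ℕ) [Fact p.Prime] (hp : 3 ≤ p)
    (ε : ZMod p) (hε : ε = 1 ∨ ε = -1) (α : (ZMod p)ˣ)
    (A : Matrix.SpecialLinearGroup (Fin 2) (ZMod p))
    (hA : (A : Matrix (Fin 2) (Fin 2) (ZMod p)) = !![ε, (α : ZMod p); 0, ε]) :
    Nat.card {B : Matrix.SpecialLinearGroup (Fin 2) (ZMod p) // IsConj A B}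
      = (p ^ 2 - 1) / 2 :=
  conj_class_card_nonsemisimple_general p hp ε α A hA
end
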